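/- In the LR-ending partisan subtraction game with S = {2, 4k+1} for a positive integer k, the value sequence of a single pile of n tokens is periodic with period 4k+3: for 0 ≤ ℓ ≤ k−1, piles of size 4ℓ, 4ℓ+1, 4ℓ+2, 4ℓ+3 have values *L, *R, {*L}, {*R} respectively, and piles of size 4k, 4k+1, 4k+2 have values *L, {*L, {*R}}, {*L, *R} respectively (all up to equivalence, and repeating with period 4k+3). -/
import Mathlib


/-- Positions of LR-ending partisan games: two terminals and finite option sets
(represented as lists; set-like behavior is captured by the `Iso` relation). -/
inductive Pos : Type
  | termL : Pos
  | termR : Pos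
  | opts : List Pos → Pos

namespace Pos

/-- Valid positions: every non-terminal position has a nonempty set of options. -/
inductive Valid : Pos → Prop
  | termL : Valid termL
  | termR : Valid termR
  | opts : ∀ gs : List Pos, gs ≠ [] → (∀ g ∈ gs, Valid g) → Valid (opts gs)

/-- Disjunctive sum. -/
def sum : Pos → Pos → Pos
  | termL, termL => termL
  | termL, termR => termR
  | termR, termL => termR
  | termR, termR => termL
  | termL, opts hs => opts (hs.attach.map (fun h => sum termL h.1))
  | termR, opts hs => opts (hs.attach.map (fun h => sum termR h.1))
  | opts gs, termL => opts (gs.attach.map (fun g => sum g.1 termL))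
  | opts gs, termR => opts (gs.attach.map (fun g => sum g.1 termR))
  | opts gs, opts hs =>
      opts (gs.attach.map (fun g => sum g.1 (opts hs)) ++
            hs.attach.map (fun h => sum (opts gs) h.1))
termination_by g h => sizeOf g + sizeOf h
decreasing_by
  all_goals
    first
      | (have := List.sizeOf_lt_of_mem h.2; simp_all; omega)
      | (have := List.sizeOf_lt_of_mem g.2; simp_all; omega)

/-- Conjugate: swap the two kinds of terminal positions. -/
def conj : Pos → Pos
  | termL => termR
  | termR => termL
  | opts gs => opts (gs.attach.map (fun g => conj g.1))
decreasing_by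
  have := List.sizeOf_lt_of_mem g.2; simp_all; omega

/-- Isomorphism of game trees (positions viewed as sets of options). -/
def Iso : Pos → Pos → Prop
  | termL, termL => True
  | termR, termR => True
  | opts gs, opts hs =>
      (∀ g ∈ gs.attach, ∃ h ∈ hs.attach, Iso g.1 h.1) ∧
      (∀ h ∈ hs.attach, ∃ g ∈ gs.attach, Iso g.1 h.1)
  | _, _ => False
termination_by g h => sizeOf g + sizeOf h
decreasing_by
  all_goals
    (have hg := List.sizeOf_lt_of_mem g.2; have hh := List.sizeOf_lt_of_mem h.2;
     simp_all; omega)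

inductive Player : Type
  | left : Player
  | right : Player
  deriving DecidableEq

/-- `Wins p b G` : player `p` has a winning strategy from position `G`,
where `b = true` means it is `p`'s turn to move and `b = false` means the
opponent is to move.  A terminal position is won by the player given by
its label, regardless of whose turn it is. -/
inductive Wins : Player → Bool → Pos → Prop
  | termL : ∀ b, Wins Player.left b termL
  | termR : ∀ b, Wins Player.right b termR
  | move : ∀ (p : Player) (gs : List Pos) (g : Pos), g ∈ gs →
      Wins p false g → Wins p true (opts gs)
  | wait : ∀ (p : Player) (gs : List Pos),
      (∀ g, g ∈ gs → Wins p true g) → Wins p false (opts gs)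

inductive Outcome : Type
  | L : Outcome
  | R : Outcome
  | N : Outcome
  | P : Outcome
  deriving DecidableEq

/-- The outcome of a position. -/
noncomputable def outcome (G : Pos) : Outcome := by
  classical
  exact
    if Wins Player.left true G then
      if Wins Player.left false G then Outcome.L else Outcome.N
    else
      if Wins Player.left false G then Outcome.P else Outcome.R

/-- Equivalence of positions: the outcome agrees in every (valid) context. -/
def equiv (G H : Pos) : Prop :=
  ∀ X : Pos, Valid X → outcome (sum G X) = outcome (sum H X)

end Pos
namespace Pos

mutual
/-- `Ln n` is the position `*L_n`: `*L_0 = *L`, `*L_n = {*L_{n-1}, ..., *L_0}`. -/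
def Ln : ℕ → Pos
  | 0 => termL
  | n + 1 => opts (LnList (n + 1))
termination_by n => 2 * n + 1
/-- `LnList n = [*L_{n-1}, ..., *L_0]`. -/
def LnList : ℕ → List Pos
  | 0 => []
  | n + 1 => Ln n :: LnList n
termination_by n => 2 * n
end

mutual
/-- `Rn n` is the position `*R_n`. -/
def Rn : ℕ → Pos
  | 0 => termR
  | n + 1 => opts (RnList (n + 1))
termination_by n => 2 * n + 1
def RnList : ℕ → List Pos
  | 0 => []
  | n + 1 => Rn n :: RnList n
termination_by n => 2 * n
end

/-- `kome n` is `✠_n = {*L_{n-1}, *R_{n-1}, ..., *L_0, *R_0}` (for `n ≥ 1`). -/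
def kome (n : ℕ) : Pos := opts (LnList n ++ RnList n)

mutual
/-- `starAux n` represents `★(n+1)`: `★1 = {*L, *R}`, `★n = {★(n-1),...,★1,*L,*R}`. -/
def starAux : ℕ → Pos
  | 0 => opts [termL, termR]
  | n + 1 => opts (starList (n + 1) ++ [termL, termR])
termination_by n => 2 * n + 1
/-- `starList n = [★n, ..., ★1]`. -/
def starList : ℕ → List Pos
  | 0 => []
  | n + 1 => starAux n :: starList n
termination_by n => 2 * n
end

/-- `bigstar n` is `★n` (meaningful for `n ≥ 1`). -/
def bigstar (n : ℕ) : Pos := starAux (n - 1)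

/-- Sum of a list of positions (`*L` is the empty sum, and `G + *L = G`). -/
def sumList (l : List Pos) : Pos := l.foldr sum termL

/-- Nim-sum (XOR) of a list of naturals. -/
def xorList (l : List ℕ) : ℕ := l.foldr (· ^^^ ·) 0

/-- Minimum excludant of a list of naturals. -/
noncomputable def mexList (l : List ℕ) : ℕ := sInf {n : ℕ | n ∉ l}

end Pos
namespace Pos

mutual
/-- A single non-initial pile of `n` tokens in Even Nim: an arbitrary positive
even number of tokens may be removed; a pile of 0 or 1 tokens is terminal,
won by Left (even remainder) resp. Right (odd remainder). -/
def npile : ℕ → Pos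
  | 0 => termL
  | 1 => termR
  | n + 2 => opts (npileList (n + 2))
termination_by n => 2 * n + 1
/-- The options of a non-initial pile of `n` tokens: `[pile (n-2), pile (n-4), ...]`. -/
def npileList : ℕ → List Pos
  | 0 => []
  | 1 => []
  | n + 2 => npile n :: npileList n
termination_by n => 2 * n
end

/-- A single initial pile of `a` tokens in Even Nim: any positive number of
tokens may be removed on the first move. -/
def ipile (a : ℕ) : Pos :=
  if a = 0 then termL else opts ((List.range a).reverse.map npile)

/-- A single pile of `n` tokens in the LR-ending partisan subtraction game with
subtraction set `S = {2, m}` (for `m ≥ 2`): a pile of 0 or 1 tokens is terminal,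
won by Left resp. Right according to the parity of the remainder. -/
def subPile (m : ℕ) (n : ℕ) : Pos :=
  if n < 2 then (if n = 0 then termL else termR)
  else opts (subPile m (n - 2) ::
    (if 2 ≤ m ∧ m ≤ n then [subPile m (n - m)] else []))
termination_by n
decreasing_by all_goals omega

end Pos

namespace Pos

/-- The period-`(4k+3)` table of values for the subtraction game with
`S = {2, 4k+1}`: residues `4ℓ, 4ℓ+1, 4ℓ+2, 4ℓ+3` (`0 ≤ ℓ ≤ k-1`) give
`*L, *R, {*L}, {*R}`, and residues `4k, 4k+1, 4k+2` give
`*L, {*L,{*R}}, {*L,*R}`. -/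
def table4k1 (k r : ℕ) : Pos :=
  if r < 4 * k then
    (if r % 4 = 0 then termL
     else if r % 4 = 1 then termR
     else if r % 4 = 2 then opts [termL]
     else opts [termR])
  else if r = 4 * k then termL
  else if r = 4 * k + 1 then opts [termL, opts [termR]]
  else opts [termL, termR]

end Pos

namespace Pos

theorem sum_tl_tl : sum termL termL = termL := by rw [sum]
theorem sum_tl_tr : sum termL termR = termR := by rw [sum]
theorem sum_tr_tl : sum termR termL = termR := by rw [sum]
theorem sum_tr_tr : sum termR termR = termL := by rw [sum]
theorem sum_tl_opts (hs : List Pos) :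
    sum termL (opts hs) = opts (hs.map (fun h => sum termL h)) := by
  rw [sum]; congr 1; simp
theorem sum_tr_opts (hs : List Pos) :
    sum termR (opts hs) = opts (hs.map (fun h => sum termR h)) := by
  rw [sum]; congr 1; simp
theorem sum_opts_tl (gs : List Pos) :
    sum (opts gs) termL = opts (gs.map (fun g => sum g termL)) := by
  rw [sum]; congr 1; simp
theorem sum_opts_tr (gs : List Pos) :
    sum (opts gs) termR = opts (gs.map (fun g => sum g termR)) := by
  rw [sum]; congr 1; simp
theorem sum_opts_opts (gs hs : List Pos) : sum (opts gs) (opts hs) =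
    opts (gs.map (fun g => sum g (opts hs)) ++ hs.map (fun h => sum (opts gs) h)) := by
  rw [sum]; congr 1; simp

theorem wins_termL {p : Player} {b : Bool} : Wins p b termL ↔ p = Player.left := by
  constructor
  · intro h; cases h; rfl
  · rintro rfl; exact Wins.termL b
theorem wins_termR {p : Player} {b : Bool} : Wins p b termR ↔ p = Player.right := by
  constructor
  · intro h; cases h; rfl
  · rintro rfl; exact Wins.termR b
theorem wins_true_opts {p : Player} {gs : List Pos} :
    Wins p true (opts gs) ↔ ∃ g ∈ gs, Wins p false g := by
  constructor
  · intro h; cases h with | move _ _ g hg hw => exact ⟨g, hg, hw⟩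
  · rintro ⟨g, hg, hw⟩; exact Wins.move p gs g hg hw
theorem wins_false_opts {p : Player} {gs : List Pos} :
    Wins p false (opts gs) ↔ ∀ g ∈ gs, Wins p true g := by
  constructor
  · intro h; cases h with | wait _ _ hw => exact hw
  · intro hw; exact Wins.wait p gs hw

/-- Strong equivalence: `Wins` agrees in every valid context. -/
def Eqv (G H : Pos) : Prop :=
  ∀ X : Pos, Valid X → ∀ (p : Player) (b : Bool), Wins p b (sum G X) ↔ Wins p b (sum H X)

theorem Eqv.refl (G : Pos) : Eqv G G := fun _ _ _ _ => Iff.rfl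
theorem Eqv.symm {G H : Pos} (h : Eqv G H) : Eqv H G := fun X hX p b => (h X hX p b).symm
theorem Eqv.trans {G H K : Pos} (h1 : Eqv G H) (h2 : Eqv H K) : Eqv G K :=
  fun X hX p b => (h1 X hX p b).trans (h2 X hX p b)

theorem outcome_congr {G H : Pos} (h1 : Wins .left true G ↔ Wins .left true H)
    (h2 : Wins .left false G ↔ Wins .left false H) : outcome G = outcome H := by
  unfold outcome
  by_cases c1 : Wins Player.left true G
  · rw [if_pos c1, if_pos (h1.mp c1)]
    by_cases c2 : Wins Player.left false G
    · rw [if_pos c2, if_pos (h2.mp c2)]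
    · rw [if_neg c2, if_neg (fun h => c2 (h2.mpr h))]
  · rw [if_neg c1, if_neg (fun h => c1 (h1.mpr h))]
    by_cases c2 : Wins Player.left false G
    · rw [if_pos c2, if_pos (h2.mp c2)]
    · rw [if_neg c2, if_neg (fun h => c2 (h2.mpr h))]

theorem Eqv.toEquiv {G H : Pos} (h : Eqv G H) : equiv G H := by
  intro X hX
  exact outcome_congr (h X hX Player.left true) (h X hX Player.left false)

theorem sizeOf_lt_of_mem_opts {x : Pos} {xs : List Pos} (hx : x ∈ xs) :
    sizeOf x < sizeOf (opts xs) := by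
  have := List.sizeOf_lt_of_mem hx
  simp only [Pos.opts.sizeOf_spec]; omega

theorem valid_of_mem_opts {x : Pos} {xs : List Pos} (hv : Valid (opts xs)) (hx : x ∈ xs) :
    Valid x := by
  cases hv with | opts _ _ h => exact h x hx

end Pos
namespace Pos

theorem sum_term_opts {c : Pos} (hc : c = termL ∨ c = termR) (xs : List Pos) :
    sum c (opts xs) = opts (xs.map (fun x => sum c x)) := by
  rcases hc with rfl | rfl
  · exact sum_tl_opts xs
  · exact sum_tr_opts xs

theorem sum_opts_term {t : Pos} (ht : t = termL ∨ t = termR) (gs : List Pos) :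
    sum (opts gs) t = opts (gs.map (fun g => sum g t)) := by
  rcases ht with rfl | rfl
  · exact sum_opts_tl gs
  · exact sum_opts_tr gs

theorem valid_term {t : Pos} (ht : t = termL ∨ t = termR) : Valid t := by
  rcases ht with rfl | rfl
  · exact Valid.termL
  · exact Valid.termR

/-- One-way transfer for the option-wise congruence. -/
theorem wins_opts_mono (gs hs : List Pos)
    (d1 : ∀ g ∈ gs, ∃ h ∈ hs, Eqv g h) (d2 : ∀ h ∈ hs, ∃ g ∈ gs, Eqv g h) :
    ∀ X : Pos, Valid X → ∀ p b, Wins p b (sum (opts gs) X) → Wins p b (sum (opts hs) X) := by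
  suffices H : ∀ N (X : Pos), sizeOf X < N → Valid X → ∀ p b,
      Wins p b (sum (opts gs) X) → Wins p b (sum (opts hs) X) by
    exact fun X hX => H (sizeOf X + 1) X (Nat.lt_succ_self _) hX
  intro N
  induction N with
  | zero => exact fun X h => absurd h (Nat.not_lt_zero _)
  | succ N ihN =>
    intro X hsz hX p b hw
    cases X with
    | termL =>
      rw [sum_opts_tl] at hw ⊢
      cases b with
      | true =>
        rw [wins_true_opts] at hw ⊢
        obtain ⟨y, hy, hwy⟩ := hw
        rw [List.mem_map] at hy; obtain ⟨g, hg, rfl⟩ := hy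
        obtain ⟨h, hh, e⟩ := d1 g hg
        exact ⟨sum h termL, List.mem_map.mpr ⟨h, hh, rfl⟩, (e termL Valid.termL p false).mp hwy⟩
      | false =>
        rw [wins_false_opts] at hw ⊢
        intro y hy
        rw [List.mem_map] at hy; obtain ⟨h, hh, rfl⟩ := hy
        obtain ⟨g, hg, e⟩ := d2 h hh
        exact (e termL Valid.termL p true).mp (hw _ (List.mem_map.mpr ⟨g, hg, rfl⟩))
    | termR =>
      rw [sum_opts_tr] at hw ⊢
      cases b with
      | true =>
        rw [wins_true_opts] at hw ⊢
        obtain ⟨y, hy, hwy⟩ := hw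
        rw [List.mem_map] at hy; obtain ⟨g, hg, rfl⟩ := hy
        obtain ⟨h, hh, e⟩ := d1 g hg
        exact ⟨sum h termR, List.mem_map.mpr ⟨h, hh, rfl⟩, (e termR Valid.termR p false).mp hwy⟩
      | false =>
        rw [wins_false_opts] at hw ⊢
        intro y hy
        rw [List.mem_map] at hy; obtain ⟨h, hh, rfl⟩ := hy
        obtain ⟨g, hg, e⟩ := d2 h hh
        exact (e termR Valid.termR p true).mp (hw _ (List.mem_map.mpr ⟨g, hg, rfl⟩))
    | opts xs =>
      rw [sum_opts_opts] at hw ⊢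
      have hxv : ∀ x ∈ xs, Valid x := fun x hx => valid_of_mem_opts hX hx
      have hxs : ∀ x ∈ xs, sizeOf x < N := fun x hx => by
        have := sizeOf_lt_of_mem_opts hx; omega
      cases b with
      | true =>
        rw [wins_true_opts] at hw ⊢
        obtain ⟨y, hy, hwy⟩ := hw
        rw [List.mem_append] at hy
        rcases hy with hy | hy
        · rw [List.mem_map] at hy; obtain ⟨g, hg, rfl⟩ := hy
          obtain ⟨h, hh, e⟩ := d1 g hg
          exact ⟨sum h (opts xs), List.mem_append.mpr (Or.inl (List.mem_map.mpr ⟨h, hh, rfl⟩)),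
            (e (opts xs) hX p false).mp hwy⟩
        · rw [List.mem_map] at hy; obtain ⟨x, hx, rfl⟩ := hy
          have := ihN x (hxs x hx) (hxv x hx) p false hwy
          exact ⟨sum (opts hs) x, List.mem_append.mpr (Or.inr (List.mem_map.mpr ⟨x, hx, rfl⟩)), this⟩
      | false =>
        rw [wins_false_opts] at hw ⊢
        intro y hy
        rw [List.mem_append] at hy
        rcases hy with hy | hy
        · rw [List.mem_map] at hy; obtain ⟨h, hh, rfl⟩ := hy
          obtain ⟨g, hg, e⟩ := d2 h hh
          exact (e (opts xs) hX p true).mp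
            (hw _ (List.mem_append.mpr (Or.inl (List.mem_map.mpr ⟨g, hg, rfl⟩))))
        · rw [List.mem_map] at hy; obtain ⟨x, hx, rfl⟩ := hy
          exact ihN x (hxs x hx) (hxv x hx) p true
            (hw _ (List.mem_append.mpr (Or.inr (List.mem_map.mpr ⟨x, hx, rfl⟩))))

theorem eqv_opts {gs hs : List Pos}
    (d1 : ∀ g ∈ gs, ∃ h ∈ hs, Eqv g h) (d2 : ∀ h ∈ hs, ∃ g ∈ gs, Eqv g h) :
    Eqv (opts gs) (opts hs) := by
  intro X hX p b
  constructor
  · exact wins_opts_mono gs hs d1 d2 X hX p b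
  · refine wins_opts_mono hs gs ?_ ?_ X hX p b
    · intro h hh; obtain ⟨g, hg, e⟩ := d2 h hh; exact ⟨g, hg, e.symm⟩
    · intro g hg; obtain ⟨h, hh, e⟩ := d1 g hg; exact ⟨h, hh, e.symm⟩

theorem eqv_single {a a' : Pos} (h : Eqv a a') : Eqv (opts [a]) (opts [a']) := by
  refine eqv_opts ?_ ?_ <;> simp_all

theorem eqv_pair {a b a' b' : Pos} (h1 : Eqv a a') (h2 : Eqv b b') :
    Eqv (opts [a, b]) (opts [a', b']) := by
  refine eqv_opts ?_ ?_
  · intro g hg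
    rcases List.mem_cons.mp hg with rfl | hg'
    · exact ⟨a', by simp, h1⟩
    · rcases List.mem_cons.mp hg' with rfl | hg''
      · exact ⟨b', by simp, h2⟩
      · simp at hg''
  · intro h hh
    rcases List.mem_cons.mp hh with rfl | hh'
    · exact ⟨a, by simp, h1⟩
    · rcases List.mem_cons.mp hh' with rfl | hh''
      · exact ⟨b, by simp, h2⟩
      · simp at hh''

end Pos
namespace Pos

theorem eqv_opts_sub_term (gs hs : List Pos)
    (hgs : ∀ g ∈ gs, g ∈ hs ∨ ∃ l, g = opts l ∧ opts hs ∈ l)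
    (hsub : ∀ h ∈ hs, h ∈ gs)
    {t : Pos} (ht : t = termL ∨ t = termR) (p : Player) (b : Bool) :
    Wins p b (sum (opts gs) t) ↔ Wins p b (sum (opts hs) t) := by
  rw [sum_opts_term ht, sum_opts_term ht]
  cases b with
  | true =>
    rw [wins_true_opts, wins_true_opts]
    constructor
    · rintro ⟨y, hy, hwy⟩
      rw [List.mem_map] at hy; obtain ⟨g, hg, rfl⟩ := hy
      rcases hgs g hg with hg' | ⟨l, rfl, hl⟩
      · exact ⟨_, List.mem_map.mpr ⟨g, hg', rfl⟩, hwy⟩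
      · rw [sum_opts_term ht, wins_false_opts] at hwy
        have := hwy (sum (opts hs) t) (List.mem_map.mpr ⟨_, hl, rfl⟩)
        rw [sum_opts_term ht, wins_true_opts] at this
        exact this
    · rintro ⟨y, hy, hwy⟩
      rw [List.mem_map] at hy; obtain ⟨h, hh, rfl⟩ := hy
      exact ⟨_, List.mem_map.mpr ⟨h, hsub h hh, rfl⟩, hwy⟩
  | false =>
    rw [wins_false_opts, wins_false_opts]
    constructor
    · intro hw y hy
      rw [List.mem_map] at hy; obtain ⟨h, hh, rfl⟩ := hy
      exact hw _ (List.mem_map.mpr ⟨h, hsub h hh, rfl⟩)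
    · intro hw y hy
      rw [List.mem_map] at hy; obtain ⟨g, hg, rfl⟩ := hy
      rcases hgs g hg with hg' | ⟨l, rfl, hl⟩
      · exact hw _ (List.mem_map.mpr ⟨g, hg', rfl⟩)
      · rw [sum_opts_term ht, wins_true_opts]
        refine ⟨sum (opts hs) t, List.mem_map.mpr ⟨_, hl, rfl⟩, ?_⟩
        rw [sum_opts_term ht, wins_false_opts]
        exact hw

/-- If `hs ⊆ gs` and every extra option of `gs` has `opts hs` itself as an option,
then `opts gs ≡ opts hs`. -/
theorem eqv_opts_sub (gs hs : List Pos)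
    (hgs : ∀ g ∈ gs, g ∈ hs ∨ ∃ l, g = opts l ∧ opts hs ∈ l)
    (hsub : ∀ h ∈ hs, h ∈ gs) :
    Eqv (opts gs) (opts hs) := by
  suffices H : ∀ N (X : Pos), sizeOf X < N → Valid X → ∀ p b,
      (Wins p b (sum (opts gs) X) ↔ Wins p b (sum (opts hs) X)) by
    exact fun X hX p b => H (sizeOf X + 1) X (Nat.lt_succ_self _) hX p b
  intro N
  induction N with
  | zero => exact fun X h => absurd h (Nat.not_lt_zero _)
  | succ N ihN =>
    intro X hsz hX p b
    cases X with
    | termL => exact eqv_opts_sub_term gs hs hgs hsub (Or.inl rfl) p b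
    | termR => exact eqv_opts_sub_term gs hs hgs hsub (Or.inr rfl) p b
    | opts xs =>
      have hxv : ∀ x ∈ xs, Valid x := fun x hx => valid_of_mem_opts hX hx
      have ihx : ∀ x ∈ xs, ∀ p b, (Wins p b (sum (opts gs) x) ↔ Wins p b (sum (opts hs) x)) :=
        fun x hx => ihN x (by have := sizeOf_lt_of_mem_opts hx; omega) (hxv x hx)
      rw [sum_opts_opts, sum_opts_opts]
      cases b with
      | true =>
        rw [wins_true_opts, wins_true_opts]
        constructor
        · rintro ⟨y, hy, hwy⟩
          rcases List.mem_append.mp hy with hy | hy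
          · rw [List.mem_map] at hy; obtain ⟨g, hg, rfl⟩ := hy
            rcases hgs g hg with hg' | ⟨l, rfl, hl⟩
            · exact ⟨_, List.mem_append.mpr (Or.inl (List.mem_map.mpr ⟨g, hg', rfl⟩)), hwy⟩
            · rw [sum_opts_opts, wins_false_opts] at hwy
              have := hwy (sum (opts hs) (opts xs))
                (List.mem_append.mpr (Or.inl (List.mem_map.mpr ⟨_, hl, rfl⟩)))
              rw [sum_opts_opts, wins_true_opts] at this
              exact this
          · rw [List.mem_map] at hy; obtain ⟨x, hx, rfl⟩ := hy
            exact ⟨_, List.mem_append.mpr (Or.inr (List.mem_map.mpr ⟨x, hx, rfl⟩)),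
              (ihx x hx p false).mp hwy⟩
        · rintro ⟨y, hy, hwy⟩
          rcases List.mem_append.mp hy with hy | hy
          · rw [List.mem_map] at hy; obtain ⟨h, hh, rfl⟩ := hy
            exact ⟨_, List.mem_append.mpr (Or.inl (List.mem_map.mpr ⟨h, hsub h hh, rfl⟩)), hwy⟩
          · rw [List.mem_map] at hy; obtain ⟨x, hx, rfl⟩ := hy
            exact ⟨_, List.mem_append.mpr (Or.inr (List.mem_map.mpr ⟨x, hx, rfl⟩)),
              (ihx x hx p false).mpr hwy⟩
      | false =>
        rw [wins_false_opts, wins_false_opts]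
        constructor
        · intro hw y hy
          rcases List.mem_append.mp hy with hy | hy
          · rw [List.mem_map] at hy; obtain ⟨h, hh, rfl⟩ := hy
            exact hw _ (List.mem_append.mpr (Or.inl (List.mem_map.mpr ⟨h, hsub h hh, rfl⟩)))
          · rw [List.mem_map] at hy; obtain ⟨x, hx, rfl⟩ := hy
            exact (ihx x hx p true).mp
              (hw _ (List.mem_append.mpr (Or.inr (List.mem_map.mpr ⟨x, hx, rfl⟩))))
        · intro hw y hy
          rcases List.mem_append.mp hy with hy | hy
          · rw [List.mem_map] at hy; obtain ⟨g, hg, rfl⟩ := hy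
            rcases hgs g hg with hg' | ⟨l, rfl, hl⟩
            · exact hw _ (List.mem_append.mpr (Or.inl (List.mem_map.mpr ⟨g, hg', rfl⟩)))
            · rw [sum_opts_opts, wins_true_opts]
              refine ⟨sum (opts hs) (opts xs),
                List.mem_append.mpr (Or.inl (List.mem_map.mpr ⟨_, hl, rfl⟩)), ?_⟩
              rw [sum_opts_opts, wins_false_opts]
              exact hw
          · rw [List.mem_map] at hy; obtain ⟨x, hx, rfl⟩ := hy
            exact (ihx x hx p true).mpr
              (hw _ (List.mem_append.mpr (Or.inr (List.mem_map.mpr ⟨x, hx, rfl⟩))))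

end Pos
namespace Pos

theorem eqv_opts_c_term (c : Pos) (gs : List Pos)
    (hopt : ∀ g ∈ gs, ∃ l, g = opts l ∧ c ∈ l)
    (g₀ : Pos) (hg₀ : g₀ ∈ gs)
    {t : Pos} (ht : t = termL ∨ t = termR)
    (h2 : ∀ p, Wins p true (sum g₀ t) → Wins p false (sum c t))
    (h3 : ∀ p, Wins p true (sum c t) → Wins p true (sum (opts gs) t))
    (p : Player) (b : Bool) :
    Wins p b (sum (opts gs) t) ↔ Wins p b (sum c t) := by
  cases b with
  | true =>
    constructor
    · intro hw
      rw [sum_opts_term ht, wins_true_opts] at hw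
      obtain ⟨y, hy, hwy⟩ := hw
      rw [List.mem_map] at hy; obtain ⟨g, hg, rfl⟩ := hy
      obtain ⟨l, rfl, hl⟩ := hopt g hg
      rw [sum_opts_term ht, wins_false_opts] at hwy
      exact hwy (sum c t) (List.mem_map.mpr ⟨c, hl, rfl⟩)
    · exact h3 p
  | false =>
    constructor
    · intro hw
      rw [sum_opts_term ht, wins_false_opts] at hw
      exact h2 p (hw (sum g₀ t) (List.mem_map.mpr ⟨g₀, hg₀, rfl⟩))
    · intro hw
      rw [sum_opts_term ht, wins_false_opts]
      intro y hy
      rw [List.mem_map] at hy; obtain ⟨g, hg, rfl⟩ := hy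
      obtain ⟨l, rfl, hl⟩ := hopt g hg
      rw [sum_opts_term ht, wins_true_opts]
      exact ⟨sum c t, List.mem_map.mpr ⟨c, hl, rfl⟩, hw⟩

/-- Master lemma: `opts gs ≡ c` for a terminal `c`, when every option of `opts gs`
has `c` among its options, and the concrete endgame conditions hold. -/
theorem eqv_opts_term_master (c : Pos) (hc : c = termL ∨ c = termR) (gs : List Pos)
    (hopt : ∀ g ∈ gs, ∃ l, g = opts l ∧ c ∈ l)
    (g₀ : Pos) (hg₀ : g₀ ∈ gs)
    (h2L : ∀ p, Wins p true (sum g₀ termL) → Wins p false (sum c termL))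
    (h2R : ∀ p, Wins p true (sum g₀ termR) → Wins p false (sum c termR))
    (h3L : ∀ p, Wins p true (sum c termL) → Wins p true (sum (opts gs) termL))
    (h3R : ∀ p, Wins p true (sum c termR) → Wins p true (sum (opts gs) termR)) :
    Eqv (opts gs) c := by
  suffices H : ∀ N (X : Pos), sizeOf X < N → Valid X → ∀ p b,
      (Wins p b (sum (opts gs) X) ↔ Wins p b (sum c X)) by
    exact fun X hX p b => H (sizeOf X + 1) X (Nat.lt_succ_self _) hX p b
  intro N
  induction N with
  | zero => exact fun X h => absurd h (Nat.not_lt_zero _)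
  | succ N ihN =>
    intro X hsz hX p b
    cases X with
    | termL => exact eqv_opts_c_term c gs hopt g₀ hg₀ (Or.inl rfl) h2L h3L p b
    | termR => exact eqv_opts_c_term c gs hopt g₀ hg₀ (Or.inr rfl) h2R h3R p b
    | opts xs =>
      have hxv : ∀ x ∈ xs, Valid x := fun x hx => valid_of_mem_opts hX hx
      have ihx : ∀ x ∈ xs, ∀ p b, (Wins p b (sum (opts gs) x) ↔ Wins p b (sum c x)) :=
        fun x hx => ihN x (by have := sizeOf_lt_of_mem_opts hx; omega) (hxv x hx)
      rw [sum_opts_opts, sum_term_opts hc]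
      cases b with
      | true =>
        rw [wins_true_opts, wins_true_opts]
        constructor
        · rintro ⟨y, hy, hwy⟩
          rcases List.mem_append.mp hy with hy | hy
          · rw [List.mem_map] at hy; obtain ⟨g, hg, rfl⟩ := hy
            obtain ⟨l, rfl, hl⟩ := hopt g hg
            rw [sum_opts_opts, wins_false_opts] at hwy
            have := hwy (sum c (opts xs))
              (List.mem_append.mpr (Or.inl (List.mem_map.mpr ⟨c, hl, rfl⟩)))
            rw [sum_term_opts hc, wins_true_opts] at this
            exact this
          · rw [List.mem_map] at hy; obtain ⟨x, hx, rfl⟩ := hy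
            exact ⟨sum c x, List.mem_map.mpr ⟨x, hx, rfl⟩, (ihx x hx p false).mp hwy⟩
        · rintro ⟨y, hy, hwy⟩
          rw [List.mem_map] at hy; obtain ⟨x, hx, rfl⟩ := hy
          exact ⟨sum (opts gs) x,
            List.mem_append.mpr (Or.inr (List.mem_map.mpr ⟨x, hx, rfl⟩)),
            (ihx x hx p false).mpr hwy⟩
      | false =>
        rw [wins_false_opts, wins_false_opts]
        constructor
        · intro hw y hy
          rw [List.mem_map] at hy; obtain ⟨x, hx, rfl⟩ := hy
          exact (ihx x hx p true).mp
            (hw _ (List.mem_append.mpr (Or.inr (List.mem_map.mpr ⟨x, hx, rfl⟩))))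
        · intro hw y hy
          rcases List.mem_append.mp hy with hy | hy
          · rw [List.mem_map] at hy; obtain ⟨g, hg, rfl⟩ := hy
            obtain ⟨l, rfl, hl⟩ := hopt g hg
            rw [sum_opts_opts, wins_true_opts]
            refine ⟨sum c (opts xs),
              List.mem_append.mpr (Or.inl (List.mem_map.mpr ⟨c, hl, rfl⟩)), ?_⟩
            rw [sum_term_opts hc, wins_false_opts]
            exact hw
          · rw [List.mem_map] at hy; obtain ⟨x, hx, rfl⟩ := hy
            exact (ihx x hx p true).mpr (hw _ (List.mem_map.mpr ⟨x, hx, rfl⟩))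

end Pos
namespace Pos

theorem eqvP1 : Eqv (opts [opts [termL]]) termL := by
  refine eqv_opts_term_master termL (Or.inl rfl) _ ?_ (opts [termL]) (by simp) ?_ ?_ ?_ ?_
  · intro g hg; simp at hg; subst hg; exact ⟨[termL], rfl, by simp⟩
  all_goals
    intro p h <;>
    simp only [sum_opts_tl, sum_opts_tr, sum_tl_tl, sum_tl_tr, sum_tr_tl, sum_tr_tr,
      List.map_cons, List.map_nil, wins_true_opts, wins_false_opts, wins_termL, wins_termR,
      List.mem_cons, List.mem_singleton, List.not_mem_nil] at h ⊢ <;>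
    simp_all [wins_true_opts, wins_false_opts, wins_termL, wins_termR]

theorem eqvP2 : Eqv (opts [opts [termR]]) termR := by
  refine eqv_opts_term_master termR (Or.inr rfl) _ ?_ (opts [termR]) (by simp) ?_ ?_ ?_ ?_
  · intro g hg; simp at hg; subst hg; exact ⟨[termR], rfl, by simp⟩
  all_goals
    intro p h <;>
    simp only [sum_opts_tl, sum_opts_tr, sum_tl_tl, sum_tl_tr, sum_tr_tl, sum_tr_tr,
      List.map_cons, List.map_nil, wins_true_opts, wins_false_opts, wins_termL, wins_termR,
      List.mem_cons, List.mem_singleton, List.not_mem_nil] at h ⊢ <;>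
    simp_all [wins_true_opts, wins_false_opts, wins_termL, wins_termR]

theorem eqvP4 : Eqv (opts [opts [termL], opts [termL, termR]]) termL := by
  refine eqv_opts_term_master termL (Or.inl rfl) _ ?_ (opts [termL]) (by simp) ?_ ?_ ?_ ?_
  · intro g hg
    rcases List.mem_cons.mp hg with rfl | hg'
    · exact ⟨[termL], rfl, by simp⟩
    · rcases List.mem_cons.mp hg' with rfl | hg''
      · exact ⟨[termL, termR], rfl, by simp⟩
      · simp at hg''
  all_goals
    intro p h <;>
    simp only [sum_opts_tl, sum_opts_tr, sum_tl_tl, sum_tl_tr, sum_tr_tl, sum_tr_tr,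
      List.map_cons, List.map_nil, wins_true_opts, wins_false_opts, wins_termL, wins_termR,
      List.mem_cons, List.mem_singleton, List.not_mem_nil] at h ⊢ <;>
    simp_all [wins_true_opts, wins_false_opts, wins_termL, wins_termR]

theorem eqvP5 : Eqv (opts [opts [termL, opts [termR]], opts [termL]]) termL := by
  refine eqv_opts_term_master termL (Or.inl rfl) _ ?_ (opts [termL]) (by simp) ?_ ?_ ?_ ?_
  · intro g hg
    rcases List.mem_cons.mp hg with rfl | hg'
    · exact ⟨[termL, opts [termR]], rfl, by simp⟩
    · rcases List.mem_cons.mp hg' with rfl | hg''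
      · exact ⟨[termL], rfl, by simp⟩
      · simp at hg''
  all_goals
    intro p h <;>
    simp only [sum_opts_tl, sum_opts_tr, sum_tl_tl, sum_tl_tr, sum_tr_tl, sum_tr_tr,
      List.map_cons, List.map_nil, wins_true_opts, wins_false_opts, wins_termL, wins_termR,
      List.mem_cons, List.mem_singleton, List.not_mem_nil] at h ⊢ <;>
    simp_all [wins_true_opts, wins_false_opts, wins_termL, wins_termR]

theorem eqvP6 : Eqv (opts [opts [termL, termR], opts [termR]]) termR := by
  refine eqv_opts_term_master termR (Or.inr rfl) _ ?_ (opts [termR]) (by simp) ?_ ?_ ?_ ?_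
  · intro g hg
    rcases List.mem_cons.mp hg with rfl | hg'
    · exact ⟨[termL, termR], rfl, by simp⟩
    · rcases List.mem_cons.mp hg' with rfl | hg''
      · exact ⟨[termR], rfl, by simp⟩
      · simp at hg''
  all_goals
    intro p h <;>
    simp only [sum_opts_tl, sum_opts_tr, sum_tl_tl, sum_tl_tr, sum_tr_tl, sum_tr_tr,
      List.map_cons, List.map_nil, wins_true_opts, wins_false_opts, wins_termL, wins_termR,
      List.mem_cons, List.mem_singleton, List.not_mem_nil] at h ⊢ <;>
    simp_all [wins_true_opts, wins_false_opts, wins_termL, wins_termR]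

theorem eqvP3 : Eqv (opts [termR, opts [termL, opts [termR]]]) (opts [termR]) := by
  refine eqv_opts_sub _ _ ?_ ?_
  · intro g hg
    rcases List.mem_cons.mp hg with rfl | hg'
    · exact Or.inl (by simp)
    · rcases List.mem_cons.mp hg' with rfl | hg''
      · exact Or.inr ⟨[termL, opts [termR]], rfl, by simp⟩
      · simp at hg''
  · intro h hh; simp at hh; subst hh; simp

theorem eqvDupL : Eqv (opts [termL, termL]) (opts [termL]) := by
  refine eqv_opts_sub _ _ ?_ ?_ <;> intro g hg <;> simp_all
theorem eqvDupR : Eqv (opts [termR, termR]) (opts [termR]) := by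
  refine eqv_opts_sub _ _ ?_ ?_ <;> intro g hg <;> simp_all
theorem eqvDupsL : Eqv (opts [opts [termL], opts [termL]]) termL :=
  (eqv_opts_sub [opts [termL], opts [termL]] [opts [termL]]
    (by intro g hg; simp_all) (by intro h hh; simp_all)).trans eqvP1
theorem eqvDupsR : Eqv (opts [opts [termR], opts [termR]]) termR :=
  (eqv_opts_sub [opts [termR], opts [termR]] [opts [termR]]
    (by intro g hg; simp_all) (by intro h hh; simp_all)).trans eqvP2
theorem eqvSwap : Eqv (opts [opts [termR], termL]) (opts [termL, opts [termR]]) := by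
  refine eqv_opts_sub _ _ ?_ ?_ <;> intro g hg <;> simp_all <;> tauto

end Pos
namespace Pos

theorem table_lt0 {k r : ℕ} (h : r < 4*k) (h0 : r % 4 = 0) : table4k1 k r = termL := by
  unfold table4k1; rw [if_pos h, if_pos h0]
theorem table_lt1 {k r : ℕ} (h : r < 4*k) (h1 : r % 4 = 1) : table4k1 k r = termR := by
  unfold table4k1; rw [if_pos h, if_neg (by omega), if_pos h1]
theorem table_lt2 {k r : ℕ} (h : r < 4*k) (h2 : r % 4 = 2) : table4k1 k r = opts [termL] := by
  unfold table4k1; rw [if_pos h, if_neg (by omega), if_neg (by omega), if_pos h2]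
theorem table_lt3 {k r : ℕ} (h : r < 4*k) (h3 : r % 4 = 3) : table4k1 k r = opts [termR] := by
  unfold table4k1; rw [if_pos h, if_neg (by omega), if_neg (by omega), if_neg (by omega)]
theorem table_4k (k : ℕ) : table4k1 k (4*k) = termL := by
  unfold table4k1; rw [if_neg (by omega), if_pos rfl]
theorem table_4k1 (k : ℕ) : table4k1 k (4*k+1) = opts [termL, opts [termR]] := by
  unfold table4k1; rw [if_neg (by omega), if_neg (by omega), if_pos rfl]
theorem table_4k2 (k : ℕ) : table4k1 k (4*k+2) = opts [termL, termR] := by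
  unfold table4k1; rw [if_neg (by omega), if_neg (by omega), if_neg (by omega)]

theorem subPile_zero (m : ℕ) : subPile m 0 = termL := by rw [subPile]; norm_num
theorem subPile_one (m : ℕ) : subPile m 1 = termR := by rw [subPile]; norm_num
theorem subPile_small {m n : ℕ} (h2 : 2 ≤ n) (hnm : n < m) :
    subPile m n = opts [subPile m (n-2)] := by
  rw [subPile, if_neg (by omega), if_neg (by omega)]
theorem subPile_big {m n : ℕ} (h2 : 2 ≤ m) (hnm : m ≤ n) :
    subPile m n = opts [subPile m (n-2), subPile m (n-m)] := by
  rw [subPile, if_neg (by omega), if_pos ⟨h2, hnm⟩]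

theorem mod_eq_aux {P x v : ℕ} (hv : v < P) (h : ∃ q, x = P * q + v) : x % P = v := by
  obtain ⟨q, rfl⟩ := h
  rw [Nat.mul_add_mod]
  exact Nat.mod_eq_of_lt hv

end Pos
open Pos in
/-- in the LR-ending partisan subtraction game with
`S = {2, 4k+1}` (`k ≥ 1`), the value of a pile of `n` tokens is periodic with
period `4k+3`, given by the table above (up to equivalence). -/
theorem subtraction_2_4k1 (k : ℕ) (hk : 1 ≤ k) (n : ℕ) :
    Pos.equiv (Pos.subPile (4 * k + 1) n) (Pos.table4k1 k (n % (4 * k + 3))) := by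
  apply Eqv.toEquiv
  induction n using Nat.strong_induction_on with
  | _ n ih =>
    by_cases hn0 : n = 0
    · subst hn0
      rw [subPile_zero, Nat.zero_mod, table_lt0 (by omega) (by omega)]
      exact Eqv.refl _
    by_cases hn1 : n = 1
    · subst hn1
      rw [subPile_one, Nat.mod_eq_of_lt (by omega), table_lt1 (by omega) (by omega)]
      exact Eqv.refl _
    have hn2 : 2 ≤ n := by omega
    by_cases hbig : 4*k+1 ≤ n
    · -- two options: n-2 and n-(4k+1)
      rw [subPile_big (by omega) hbig]
      have ih2 := ih (n-2) (by omega)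
      have ihm := ih (n-(4*k+1)) (by omega)
      obtain ⟨q, r, hq, hrlt, hrw⟩ : ∃ q r, (4*k+3)*q + r = n ∧ r < 4*k+3 ∧ n % (4*k+3) = r :=
        ⟨n / (4*k+3), n % (4*k+3), Nat.div_add_mod n _, Nat.mod_lt _ (by omega), rfl⟩
      rw [hrw]
      have e2 : (n-2) % (4*k+3) = if r < 2 then r + (4*k+1) else r - 2 := by
        rcases q with _ | q
        · rw [Nat.mul_zero, Nat.zero_add] at hq
          rw [if_neg (by omega)]
          exact mod_eq_aux (by omega) ⟨0, by omega⟩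
        · rw [Nat.mul_succ] at hq
          by_cases h2 : r < 2
          · rw [if_pos h2]; exact mod_eq_aux (by omega) ⟨q, by omega⟩
          · rw [if_neg h2]; exact mod_eq_aux (by omega) ⟨q+1, by rw [Nat.mul_succ]; omega⟩
      have em : (n-(4*k+1)) % (4*k+3) = if r ≤ 4*k then r + 2 else r - (4*k+1) := by
        rcases q with _ | q
        · rw [Nat.mul_zero, Nat.zero_add] at hq
          rw [if_neg (by omega)]
          exact mod_eq_aux (by omega) ⟨0, by omega⟩
        · rw [Nat.mul_succ] at hq
          by_cases hle : r ≤ 4*k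
          · rw [if_pos hle]; exact mod_eq_aux (by omega) ⟨q, by omega⟩
          · rw [if_neg hle]; exact mod_eq_aux (by omega) ⟨q+1, by rw [Nat.mul_succ]; omega⟩
      rw [e2] at ih2
      rw [em] at ihm
      by_cases h0 : r = 0
      · have t2 : (if r < 2 then r + (4*k+1) else r - 2) = 4*k+1 := by split_ifs <;> omega
        have tm : (if r ≤ 4*k then r + 2 else r - (4*k+1)) = 2 := by split_ifs <;> omega
        rw [t2, table_4k1] at ih2
        rw [tm, table_lt2 (by omega) (by omega)] at ihm
        rw [h0, table_lt0 (by omega) (by omega)]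
        exact (eqv_pair ih2 ihm).trans eqvP5
      by_cases h1 : r = 1
      · have t2 : (if r < 2 then r + (4*k+1) else r - 2) = 4*k+2 := by split_ifs <;> omega
        have tm : (if r ≤ 4*k then r + 2 else r - (4*k+1)) = 3 := by split_ifs <;> omega
        rw [t2, table_4k2] at ih2
        rw [tm, table_lt3 (by omega) (by omega)] at ihm
        rw [h1, table_lt1 (by omega) (by omega)]
        exact (eqv_pair ih2 ihm).trans eqvP6
      by_cases h4k : r = 4*k
      · have t2 : (if r < 2 then r + (4*k+1) else r - 2) = 4*k-2 := by split_ifs <;> omega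
        have tm : (if r ≤ 4*k then r + 2 else r - (4*k+1)) = 4*k+2 := by split_ifs <;> omega
        rw [t2, table_lt2 (by omega) (by omega)] at ih2
        rw [tm, table_4k2] at ihm
        rw [h4k, table_4k]
        exact (eqv_pair ih2 ihm).trans eqvP4
      by_cases h4k1 : r = 4*k+1
      · have t2 : (if r < 2 then r + (4*k+1) else r - 2) = 4*k-1 := by split_ifs <;> omega
        have tm : (if r ≤ 4*k then r + 2 else r - (4*k+1)) = 0 := by split_ifs <;> omega
        rw [t2, table_lt3 (by omega) (by omega)] at ih2
        rw [tm, table_lt0 (by omega) (by omega)] at ihm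
        rw [h4k1, table_4k1]
        exact (eqv_pair ih2 ihm).trans eqvSwap
      by_cases h4k2 : r = 4*k+2
      · have t2 : (if r < 2 then r + (4*k+1) else r - 2) = 4*k := by split_ifs <;> omega
        have tm : (if r ≤ 4*k then r + 2 else r - (4*k+1)) = 1 := by split_ifs <;> omega
        rw [t2, table_4k] at ih2
        rw [tm, table_lt1 (by omega) (by omega)] at ihm
        rw [h4k2, table_4k2]
        exact eqv_pair ih2 ihm
      -- now 2 ≤ r ≤ 4k-1
      have t2 : (if r < 2 then r + (4*k+1) else r - 2) = r-2 := by split_ifs <;> omega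
      have tm : (if r ≤ 4*k then r + 2 else r - (4*k+1)) = r+2 := by split_ifs <;> omega
      rw [t2] at ih2
      rw [tm] at ihm
      have hm4 : r % 4 = 0 ∨ r % 4 = 1 ∨ r % 4 = 2 ∨ r % 4 = 3 := by omega
      rcases hm4 with h | h | h | h
      · rw [table_lt2 (by omega) (by omega)] at ih2
        rw [table_lt2 (by omega) (by omega)] at ihm
        rw [table_lt0 (by omega) (by omega)]
        exact (eqv_pair ih2 ihm).trans eqvDupsL
      · rw [table_lt3 (by omega) (by omega)] at ih2
        rw [table_lt3 (by omega) (by omega)] at ihm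
        rw [table_lt1 (by omega) (by omega)]
        exact (eqv_pair ih2 ihm).trans eqvDupsR
      · rw [table_lt0 (by omega) (by omega)] at ih2
        have hmval : table4k1 k (r+2) = termL := by
          by_cases hr4k : r+2 = 4*k
          · rw [hr4k, table_4k]
          · exact table_lt0 (by omega) (by omega)
        rw [hmval] at ihm
        rw [table_lt2 (by omega) (by omega)]
        exact (eqv_pair ih2 ihm).trans eqvDupL
      · rw [table_lt1 (by omega) (by omega)] at ih2
        by_cases hlast : r = 4*k-1
        · have : r+2 = 4*k+1 := by omega
          rw [this, table_4k1] at ihm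
          rw [table_lt3 (by omega) (by omega)]
          exact (eqv_pair ih2 ihm).trans eqvP3
        · rw [table_lt1 (by omega) (by omega)] at ihm
          rw [table_lt3 (by omega) (by omega)]
          exact (eqv_pair ih2 ihm).trans eqvDupR
    · -- one option: 2 ≤ n < 4k+1
      rw [subPile_small hn2 (by omega)]
      have en : n % (4*k+3) = n := Nat.mod_eq_of_lt (by omega)
      have e2 : (n-2) % (4*k+3) = n-2 := Nat.mod_eq_of_lt (by omega)
      have ih2 := ih (n-2) (by omega)
      rw [e2] at ih2
      rw [en]
      have hm4 : n % 4 = 0 ∨ n % 4 = 1 ∨ n % 4 = 2 ∨ n % 4 = 3 := by omega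
      rcases hm4 with h | h | h | h
      · rw [table_lt2 (by omega) (by omega)] at ih2
        have hval : table4k1 k n = termL := by
          by_cases h4 : n = 4*k
          · rw [h4, table_4k]
          · exact table_lt0 (by omega) (by omega)
        rw [hval]
        exact (eqv_single ih2).trans eqvP1
      · rw [table_lt3 (by omega) (by omega)] at ih2
        rw [table_lt1 (by omega) (by omega)]
        exact (eqv_single ih2).trans eqvP2
      · rw [table_lt0 (by omega) (by omega)] at ih2
        rw [table_lt2 (by omega) (by omega)]
        exact eqv_single ih2
      · rw [table_lt1 (by omega) (by omega)] at ih2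
        rw [table_lt3 (by omega) (by omega)]
        exact eqv_single ih2
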